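/- arXiv:2501.03662 — 3 statements merged into one kernel-verified Lean document; each statement's English description precedes it below -/
import Mathlib

section
/- Fix real constants b_- > 0, c_- > 0 and a_-. With r_ε = √(c_-^2 + 3 ε b_-) and x_ε^+ = (c_- + r_ε)/3, one has for every ε > 0 the inequality 27·p̄_ε(x_ε^+) > 6√3·ε^{3/2}·b_-^{3/2} + ε·(27 a_- + 9 b_- c_-), where p̄_ε(x) = -x^3 + c_- x^2 + ε b_- x + ε a_-. Consequently there exists ε_1 > 0 such that p̄_ε(x_ε^+) > 0 for all ε > ε_1. -/
lemma rpow32 (x : ℝ) (hx : 0 ≤ x) : x ^ ((3 : ℝ) / 2) = Real.sqrt x ^ 3 := by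
  rw [Real.sqrt_eq_rpow, ← Real.rpow_natCast (x ^ ((1:ℝ)/2)) 3, ← Real.rpow_mul hx]
  norm_num

/-- For b₋, c₋ > 0 and any a₋, with r_ε = √(c₋²+3εb₋) and x⁺_ε = (c₋+r_ε)/3, one has
27 p̄_ε(x⁺_ε) > 6√3 ε^{3/2} b₋^{3/2} + ε(27a₋ + 9b₋c₋) for every ε > 0; consequently
there exists ε₁ > 0 with p̄_ε(x⁺_ε) > 0 for all ε > ε₁. -/
theorem stmt_5 (bm cm am : ℝ) (hb : 0 < bm) (hc : 0 < cm) :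
    let p : ℝ → ℝ → ℝ := fun ε x => -x ^ 3 + cm * x ^ 2 + ε * bm * x + ε * am
    let r : ℝ → ℝ := fun ε => Real.sqrt (cm ^ 2 + 3 * ε * bm)
    let xp : ℝ → ℝ := fun ε => (cm + r ε) / 3
    (∀ ε : ℝ, 0 < ε →
      6 * Real.sqrt 3 * ε ^ ((3 : ℝ) / 2) * bm ^ ((3 : ℝ) / 2) + ε * (27 * am + 9 * bm * cm)
        < 27 * p ε (xp ε)) ∧
    ∃ ε₁ > (0 : ℝ), ∀ ε : ℝ, ε₁ < ε → 0 < p ε (xp ε) := by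
  intro p r xp
  have key : ∀ ε : ℝ, 0 < ε →
      27 * p ε (xp ε) = 2*cm^3 + 2*(r ε)^3 + 9*ε*bm*cm + 27*ε*am := by
    intro ε hε
    have hnn : 0 ≤ cm^2 + 3*ε*bm := by positivity
    have hr2 : Real.sqrt (cm ^ 2 + 3 * ε * bm) ^ 2 = cm^2 + 3*ε*bm := Real.sq_sqrt hnn
    show 27 * (-(((cm + Real.sqrt (cm ^ 2 + 3 * ε * bm))/3) ^ 3)
        + cm * ((cm + Real.sqrt (cm ^ 2 + 3 * ε * bm))/3) ^ 2
        + ε * bm * ((cm + Real.sqrt (cm ^ 2 + 3 * ε * bm))/3) + ε * am)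
      = 2*cm^3 + 2*(Real.sqrt (cm ^ 2 + 3 * ε * bm))^3 + 9*ε*bm*cm + 27*ε*am
    linear_combination (-3 * Real.sqrt (cm ^ 2 + 3 * ε * bm)) * hr2
  have hrgt : ∀ ε : ℝ, 0 < ε → Real.sqrt (3*ε*bm) < r ε := by
    intro ε hε
    show Real.sqrt (3*ε*bm) < Real.sqrt (cm ^ 2 + 3 * ε * bm)
    apply Real.sqrt_lt_sqrt (by positivity)
    nlinarith
  constructor
  · intro ε hε
    have h1 := key ε hε
    have h2 := hrgt ε hε
    have hs0 : 0 ≤ Real.sqrt (3*ε*bm) := Real.sqrt_nonneg _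
    have hcube : (Real.sqrt (3*ε*bm))^3 < (r ε)^3 :=
      pow_lt_pow_left₀ h2 hs0 (by norm_num)
    have hsplit : Real.sqrt (3*ε*bm) = Real.sqrt 3 * Real.sqrt ε * Real.sqrt bm := by
      rw [Real.sqrt_mul (by positivity), Real.sqrt_mul (by norm_num)]
    have h33 : Real.sqrt 3 ^ 3 = 3 * Real.sqrt 3 := by
      have h : Real.sqrt 3 ^ 2 = 3 := Real.sq_sqrt (by norm_num)
      rw [pow_succ, h]
    have h3 : (Real.sqrt (3*ε*bm))^3
        = 3 * Real.sqrt 3 * Real.sqrt ε ^ 3 * Real.sqrt bm ^ 3 := by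
      rw [hsplit, mul_pow, mul_pow, h33]
    rw [rpow32 ε hε.le, rpow32 bm hb.le, h1]
    have hc3 : 0 < cm ^ 3 := by positivity
    linarith [hcube, h3]
  · refine ⟨max 1 ((|9*bm*cm + 27*am|/(6*bm))^2/(3*bm)),
      lt_max_of_lt_left one_pos, ?_⟩
    intro ε hε
    have hε0 : 0 < ε := lt_trans (lt_of_lt_of_le one_pos (le_max_left _ _)) hε
    have h1 := key ε hε0
    have h2 := hrgt ε hε0
    set K := |9*bm*cm + 27*am| with hKdef
    have hK0 : 0 ≤ K := abs_nonneg _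
    have hs0 : 0 ≤ Real.sqrt (3*ε*bm) := Real.sqrt_nonneg _
    have hs2 : (Real.sqrt (3*ε*bm))^2 = 3*ε*bm := Real.sq_sqrt (by positivity)
    have hεK : (K/(6*bm))^2/(3*bm) < ε := lt_of_le_of_lt (le_max_right _ _) hε
    have hs : K/(6*bm) ≤ Real.sqrt (3*ε*bm) := by
      rw [show K/(6*bm) = Real.sqrt ((K/(6*bm))^2) by
        rw [Real.sqrt_sq (by positivity)]]
      apply Real.sqrt_le_sqrt
      have h := (div_lt_iff₀ (show (0:ℝ) < 3*bm by positivity)).mp hεK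
      nlinarith [h]
    have hKabs : -(9*bm*cm+27*am) ≤ K := by
      have := neg_abs_le (9*bm*cm + 27*am); rw [← hKdef] at this; linarith
    have hcube : (Real.sqrt (3*ε*bm))^3 < (r ε)^3 :=
      pow_lt_pow_left₀ h2 hs0 (by norm_num)
    have hc3 : (Real.sqrt (3*ε*bm))^3 = (3*ε*bm) * Real.sqrt (3*ε*bm) := by
      rw [pow_succ, hs2]
    have hdiv : 6*ε*bm*(K/(6*bm)) = ε*K := by field_simp
    have hmul : 6*ε*bm*(K/(6*bm)) ≤ 6*ε*bm*Real.sqrt (3*ε*bm) :=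
      mul_le_mul_of_nonneg_left hs (by positivity)
    have hcm3 : 0 < cm ^ 3 := by positivity
    nlinarith [hcube, hc3, hdiv, hmul, hKabs, mul_le_mul_of_nonneg_left hKabs hε0.le]
end

section
/- Let f : ℝ × ℝ → ℝ be continuous and suppose there exist δ > 0 and r_1 ∈ ℝ such that f(t, y) ≥ δ for all t ∈ ℝ and all y ≤ r_1. If x : ℝ → ℝ is a differentiable function satisfying x'(t) = f(t, x(t)) for all t ∈ ℝ and x is bounded below, then x(t) > r_1 for all t ∈ ℝ. -/
/-- If f is continuous and f(t, y) ≥ δ > 0 whenever y ≤ r₁, then any globally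
defined solution of x' = f(t, x) which is bounded below satisfies x(t) > r₁
for all t. -/
theorem stmt_13 (f : ℝ × ℝ → ℝ) (δ r₁ : ℝ) (hf : Continuous f) (hδ : 0 < δ)
    (hlow : ∀ t y : ℝ, y ≤ r₁ → δ ≤ f (t, y))
    (x : ℝ → ℝ) (hx : ∀ t, HasDerivAt x (f (t, x t)) t)
    (hbd : ∃ m, ∀ t, m ≤ x t) :
    ∀ t : ℝ, r₁ < x t := by
  obtain ⟨m, hm⟩ := hbd
  intro t₀
  by_contra h
  push_neg at h
  have hxc : Continuous x := by
    have : Differentiable ℝ x := fun t => (hx t).differentiableAt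
    exact this.continuous
  -- Step A: x t ≤ r₁ for all t ≤ t₀
  have hA : ∀ s ≤ t₀, x s ≤ r₁ := by
    intro s hs
    by_contra hxs
    push_neg at hxs
    have hst : s < t₀ := lt_of_le_of_ne hs (by rintro rfl; exact absurd h (not_le.mpr hxs))
    set S : Set ℝ := Set.Icc s t₀ ∩ {t | x t ≤ r₁} with hS
    have hSne : S.Nonempty := ⟨t₀, ⟨hs, le_refl _⟩, h⟩
    have hSbdd : BddBelow S := ⟨s, fun t ht => ht.1.1⟩
    have hSclosed : IsClosed S := isClosed_Icc.inter (isClosed_le hxc continuous_const)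
    set u := sInf S with hu
    have huS : u ∈ S := hSclosed.csInf_mem hSne hSbdd
    have hsu : s < u := by
      rcases lt_or_eq_of_le huS.1.1 with h' | h'
      · exact h'
      · exact absurd huS.2 (not_le.mpr (h' ▸ hxs))
    -- on [s, u), x t > r₁
    have hgt : ∀ t ∈ Set.Ico s u, r₁ < x t := by
      intro t ht
      by_contra hle
      push_neg at hle
      exact absurd (csInf_le hSbdd ⟨⟨ht.1, ht.2.le.trans huS.1.2⟩, hle⟩) (not_le.mpr ht.2)
    -- derivative at u is ≥ δ > 0, but slope from the left is negative
    have hd : δ ≤ f (u, x u) := hlow u (x u) huS.2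
    have hslope : Filter.Tendsto (slope x u) (nhdsWithin u {u}ᶜ) (nhds (f (u, x u))) :=
      hasDerivAt_iff_tendsto_slope.mp (hx u)
    have hne : (nhdsWithin u (Set.Ioo s u)).NeBot := by
      refine mem_closure_iff_nhdsWithin_neBot.mp ?_
      rw [closure_Ioo (ne_of_lt hsu)]
      exact ⟨hsu.le, le_refl u⟩
    have hle0 : f (u, x u) ≤ 0 := by
      have hsub : nhdsWithin u (Set.Ioo s u) ≤ nhdsWithin u {u}ᶜ :=
        nhdsWithin_mono u (fun t ht => ne_of_lt ht.2)
      refine le_of_tendsto (hslope.mono_left hsub) ?_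
      filter_upwards [self_mem_nhdsWithin] with t ht
      have h1 : r₁ < x t := hgt t ⟨ht.1.le, ht.2⟩
      have h2 : x u ≤ r₁ := huS.2
      have : 0 < x t - x u := by linarith
      have htu : t - u < 0 := by linarith [ht.2]
      rw [slope_def_field]
      exact le_of_lt (div_neg_of_pos_of_neg this htu)
    linarith
  -- Step B: mean value inequality on Iic t₀
  have hmv : ∀ s ∈ Set.Iic t₀, ∀ t ∈ Set.Iic t₀, s ≤ t → δ * (t - s) ≤ x t - x s := by
    refine (convex_Iic t₀).mul_sub_le_image_sub_of_le_deriv hxc.continuousOn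
      (fun t _ => (hx t).differentiableAt.differentiableWithinAt) ?_
    intro t ht
    rw [interior_Iic] at ht
    rw [(hx t).deriv]
    exact hlow t (x t) (hA t ht.le)
  -- choose s far in the past
  have hmr : m ≤ r₁ := (hm t₀).trans h
  obtain ⟨s, hsdef⟩ : ∃ s, s = t₀ - (r₁ - m) / δ - 1 := ⟨_, rfl⟩
  have hdiv : 0 ≤ (r₁ - m) / δ := div_nonneg (by linarith) hδ.le
  have hsle : s ≤ t₀ := by linarith
  have := hmv s (Set.mem_Iic.mpr hsle) t₀ (Set.mem_Iic.mpr le_rfl) hsle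
  have hts : t₀ - s = (r₁ - m) / δ + 1 := by rw [hsdef]; ring
  rw [hts] at this
  have hxt : x t₀ ≤ r₁ := h
  have hxs : m ≤ x s := hm s
  have : δ * ((r₁ - m) / δ + 1) ≤ r₁ - m := by linarith
  rw [mul_add, mul_one, mul_div_cancel₀ _ (ne_of_gt hδ)] at this
  linarith
end

section
/- Let a, b, c : ℝ → ℝ be continuous with a(t) < 0 for all t and let ε > 0. If x : [t_0, T) → ℝ solves x'(t) = -x(t)^3 + c(t) x(t)^2 + ε(b(t) x(t) + a(t)) and x(t_1) = 0 for some t_1 ∈ [t_0, T), then x'(t_1) < 0; consequently x(t) < 0 for all t > t_1 sufficiently close to t_1, and if in addition b(t) ≥ 0 for all t, then x(t) < 0 for all t ∈ (t_1, T). -/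
open Filter Set Topology

/-- For the cubic nonautonomous ODE with a < 0 and ε > 0: at any zero of a solution
the derivative is negative; hence the solution becomes negative immediately after,
and if moreover b ≥ 0 then it stays negative ever after. -/
theorem stmt_16 (a b c : ℝ → ℝ) (ε : ℝ)
    (hacont : Continuous a) (hbcont : Continuous b) (hccont : Continuous c)
    (ha : ∀ t, a t < 0) (hε : 0 < ε)
    (t₀ T : ℝ) (x : ℝ → ℝ)
    (hx : ∀ t ∈ Set.Ico t₀ T,
      HasDerivAt x (-x t ^ 3 + c t * x t ^ 2 + ε * (b t * x t + a t)) t)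
    (t₁ : ℝ) (ht₁ : t₁ ∈ Set.Ico t₀ T) (hz : x t₁ = 0) :
    (-x t₁ ^ 3 + c t₁ * x t₁ ^ 2 + ε * (b t₁ * x t₁ + a t₁) < 0) ∧
    (∃ δ > (0 : ℝ), ∀ t, t₁ < t → t < t₁ + δ → t < T → x t < 0) ∧
    ((∀ t, 0 ≤ b t) → ∀ t, t₁ < t → t < T → x t < 0) := by
  -- at any zero the derivative value is ε * a τ < 0
  have key : ∀ τ, x τ = 0 →
      -x τ ^ 3 + c τ * x τ ^ 2 + ε * (b τ * x τ + a τ) < 0 := by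
    intro τ h0
    rw [h0]
    have := ha τ
    nlinarith
  -- just after any zero inside the interval, x is negative
  have after : ∀ τ, τ ∈ Set.Ico t₀ T → x τ = 0 →
      ∃ δ > (0:ℝ), ∀ t, τ < t → t < τ + δ → x t < 0 := by
    intro τ hτ h0
    have hd := hx τ hτ
    have hslope : Tendsto (slope x τ) (𝓝[>] τ)
        (𝓝 (-x τ ^ 3 + c τ * x τ ^ 2 + ε * (b τ * x τ + a τ))) :=
      (hasDerivAt_iff_tendsto_slope.mp hd).mono_left
        (nhdsWithin_mono _ fun u hu => ne_of_gt hu)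
    have hneg : ∀ᶠ u in 𝓝[>] τ, slope x τ u < 0 :=
      hslope.eventually_lt_const (key τ h0)
    have hneg' : ∀ᶠ u in 𝓝[>] τ, x u < 0 := by
      filter_upwards [hneg, self_mem_nhdsWithin] with u hu hu'
      rw [slope_def_field, h0, sub_zero] at hu
      have h1 : (0:ℝ) < u - τ := sub_pos.mpr hu'
      by_contra h
      push_neg at h
      exact absurd (div_nonneg h h1.le) (not_le.mpr hu)
    rcases mem_nhdsGT_iff_exists_Ioo_subset.mp hneg' with ⟨u, hu, hsub⟩
    refine ⟨u - τ, sub_pos.mpr hu, fun t ht1 ht2 => hsub ⟨ht1, by linarith⟩⟩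
  refine ⟨key t₁ hz, ?_, ?_⟩
  · rcases after t₁ ht₁ hz with ⟨δ, hδ, hδ'⟩
    exact ⟨δ, hδ, fun t h1 h2 _ => hδ' t h1 h2⟩
  · intro hb t ht1 htT
    by_contra h
    push_neg at h
    -- 0 ≤ x t; derive contradiction
    rcases after t₁ ht₁ hz with ⟨δ, hδ, hδ'⟩
    set s₀ : ℝ := min (t₁ + δ/2) ((t₁ + t)/2) with hs₀def
    have hs₀gt : t₁ < s₀ := lt_min (by linarith) (by linarith)
    have hs₀lt : s₀ < t₁ + δ := (min_le_left _ _).trans_lt (by linarith)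
    have hs₀t : s₀ < t := (min_le_right _ _).trans_lt (by linarith)
    have hxs₀ : x s₀ < 0 := hδ' s₀ hs₀gt hs₀lt
    have hsubIco : Set.Icc s₀ t ⊆ Set.Ico t₀ T := fun u hu =>
      ⟨ht₁.1.trans (hs₀gt.le.trans hu.1), lt_of_le_of_lt hu.2 htT⟩
    have hcont : ContinuousOn x (Set.Icc s₀ t) := fun u hu =>
      ((hx u (hsubIco hu)).continuousAt).continuousWithinAt
    -- B is the set of zeros of x in [s₀, t]
    set B : Set ℝ := {u | u ∈ Set.Icc s₀ t ∧ x u = 0} with hBdef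
    have hBne : B.Nonempty := by
      have : (0:ℝ) ∈ Set.Icc (x s₀) (x t) := ⟨hxs₀.le, h⟩
      rcases intermediate_value_Icc hs₀t.le hcont this with ⟨u, hu, hxu⟩
      exact ⟨u, hu, hxu⟩
    have hBbdd : BddBelow B := ⟨s₀, fun u hu => hu.1.1⟩
    have hBclosed : IsClosed B := by
      have : B = Set.Icc s₀ t ∩ x ⁻¹' {0} := by
        ext u; simp [hBdef, Set.mem_inter_iff]
      rw [this]
      exact hcont.preimage_isClosed_of_isClosed isClosed_Icc isClosed_singleton
    set t₂ : ℝ := sInf B with ht₂def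
    have ht₂B : t₂ ∈ B := hBclosed.csInf_mem hBne hBbdd
    have ht₂Icc : t₂ ∈ Set.Icc s₀ t := ht₂B.1
    have hxt₂ : x t₂ = 0 := ht₂B.2
    have hs₀t₂ : s₀ < t₂ := by
      rcases lt_or_eq_of_le ht₂Icc.1 with h' | h'
      · exact h'
      · exact absurd hxt₂ (by rw [← h']; exact ne_of_lt hxs₀)
    -- x < 0 on [s₀, t₂)
    have hxneg : ∀ u, s₀ ≤ u → u < t₂ → x u < 0 := by
      intro u hu1 hu2
      by_contra hcon
      push_neg at hcon
      have huIcc : u ∈ Set.Icc s₀ t := ⟨hu1, hu2.le.trans ht₂Icc.2⟩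
      have : (0:ℝ) ∈ Set.Icc (x s₀) (x u) := ⟨hxs₀.le, hcon⟩
      rcases intermediate_value_Icc hu1 (hcont.mono (Set.Icc_subset_Icc_right huIcc.2))
        this with ⟨v, hv, hxv⟩
      have hvB : v ∈ B := ⟨⟨hv.1, hv.2.trans huIcc.2⟩, hxv⟩
      exact absurd (csInf_le hBbdd hvB) (not_le.mpr (lt_of_le_of_lt hv.2 hu2))
    -- derivative at t₂ from the left is nonneg, contradiction with key
    have hd₂ := hx t₂ (hsubIco ht₂Icc)
    have hslope : Tendsto (slope x t₂) (𝓝[<] t₂)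
        (𝓝 (-x t₂ ^ 3 + c t₂ * x t₂ ^ 2 + ε * (b t₂ * x t₂ + a t₂))) :=
      (hasDerivAt_iff_tendsto_slope.mp hd₂).mono_left
        (nhdsWithin_mono _ fun u hu => ne_of_lt hu)
    have hge : ∀ᶠ u in 𝓝[<] t₂, 0 ≤ slope x t₂ u := by
      filter_upwards [Ioo_mem_nhdsLT hs₀t₂] with u hu
      rw [slope_def_field, hxt₂, sub_zero]
      have h1 : x u < 0 := hxneg u hu.1.le hu.2
      have h2 : u - t₂ < 0 := sub_neg.mpr hu.2
      exact le_of_lt (div_pos_of_neg_of_neg h1 h2)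
    have : 0 ≤ -x t₂ ^ 3 + c t₂ * x t₂ ^ 2 + ε * (b t₂ * x t₂ + a t₂) :=
      ge_of_tendsto hslope hge
    exact absurd this (not_le.mpr (key t₂ hxt₂))
end
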